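/- arXiv:1111.6570 — 3 statements merged into one kernel-verified Lean document; each statement's English description precedes it below -/
import Mathlib

section
/- For graded Fréchet spaces X, Y, Z with Z a graded Fréchet space, if φ ∈ PT(X,Y) is polynomially tame and ψ ∈ Reg(Y,Z) is regular, then the composition ψ ∘ φ belongs to Reg(X,Z). -/
/-- `φ : X → Y` is polynomially tame of degree `r`. -/
def PTdeg {X Y : Type*} (sX : ℕ → X → ℝ) (sY : ℕ → Y → ℝ) (r : ℤ) (φ : X → Y) : Prop :=
  ∃ b k : ℕ, 0 < k ∧ ∀ n : ℕ, (b : ℤ) + |r| ≤ (n : ℤ) →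
    ∃ C : ℝ, 0 < C ∧ ∀ x, sY n (φ x) ≤ C * sX ((n : ℤ) + r).toNat x ^ k

/-- `PT(X,Y)`: polynomially tame maps (of some degree). -/
def PTmap {X Y : Type*} (sX : ℕ → X → ℝ) (sY : ℕ → Y → ℝ) (φ : X → Y) : Prop :=
  ∃ r : ℤ, PTdeg sX sY r φ

/-- `Reg(X,Y)`: regular maps, i.e. polynomially tame of every degree `r ∈ ℤ`. -/
def RegMap {X Y : Type*} (sX : ℕ → X → ℝ) (sY : ℕ → Y → ℝ) (φ : X → Y) : Prop :=
  ∀ r : ℤ, PTdeg sX sY r φ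

/-- For graded Fréchet spaces `X, Y, Z`, if `φ ∈ PT(X,Y)` is
polynomially tame and `ψ ∈ Reg(Y,Z)` is regular, then `ψ ∘ φ ∈ Reg(X,Z)`. -/
theorem comp_regular_polyTame_is_regular
    {X Y Z : Type*}
    (sX : ℕ → X → ℝ) (sY : ℕ → Y → ℝ) (sZ : ℕ → Z → ℝ)
    (hXmono : ∀ (n : ℕ) (x : X), sX n x ≤ sX (n + 1) x)
    (hYmono : ∀ (n : ℕ) (y : Y), sY n y ≤ sY (n + 1) y)
    (hZmono : ∀ (n : ℕ) (z : Z), sZ n z ≤ sZ (n + 1) z)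
    (hXnonneg : ∀ n x, 0 ≤ sX n x)
    (hYnonneg : ∀ n y, 0 ≤ sY n y)
    (φ : X → Y) (ψ : Y → Z)
    (hφ : PTmap sX sY φ) (hψ : RegMap sY sZ ψ) :
    RegMap sX sZ (ψ ∘ φ) := by
  obtain ⟨r₀, b₁, k₁, hk₁, H₁⟩ := hφ
  intro r
  obtain ⟨b₂, k₂, hk₂, H₂⟩ := hψ (r - r₀)
  refine ⟨b₁ + b₂ + |r₀|.toNat + |r₀|.toNat + |r - r₀|.toNat, k₁ * k₂,
    Nat.mul_pos hk₁ hk₂, ?_⟩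
  intro n hn
  have e0 : ((|r₀|.toNat : ℕ) : ℤ) = |r₀| := Int.toNat_of_nonneg (abs_nonneg _)
  have e1 : ((|r - r₀|.toNat : ℕ) : ℤ) = |r - r₀| := Int.toNat_of_nonneg (abs_nonneg _)
  have a1 : -|r| ≤ r := neg_abs_le r
  have a2 : r₀ ≤ |r₀| := le_abs_self r₀
  have a3 : -|r₀| ≤ r₀ := neg_abs_le r₀
  have a4 : (0:ℤ) ≤ |r| := abs_nonneg r
  have a5 : (0:ℤ) ≤ |r - r₀| := abs_nonneg _
  push_cast at hn
  rw [e0, e1] at hn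
  have hn2 : (b₂ : ℤ) + |r - r₀| ≤ (n : ℤ) := by omega
  obtain ⟨C₂, hC₂, hB₂⟩ := H₂ n hn2
  set m₁ : ℕ := ((n : ℤ) + (r - r₀)).toNat with hm₁def
  have hs : (0:ℤ) ≤ (n : ℤ) + (r - r₀) := by omega
  have em : (m₁ : ℤ) = (n : ℤ) + (r - r₀) := Int.toNat_of_nonneg hs
  have hm₁ : (b₁ : ℤ) + |r₀| ≤ (m₁ : ℤ) := by omega
  obtain ⟨C₁, hC₁, hB₁⟩ := H₁ m₁ hm₁
  have eidx : ((m₁ : ℤ) + r₀).toNat = ((n : ℤ) + r).toNat := by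
    rw [em]; ring_nf
  refine ⟨C₂ * C₁ ^ k₂, by positivity, ?_⟩
  intro x
  have h1 : sZ n (ψ (φ x)) ≤ C₂ * sY m₁ (φ x) ^ k₂ := hB₂ (φ x)
  have h2 : sY m₁ (φ x) ≤ C₁ * sX (((n : ℤ) + r).toNat) x ^ k₁ := by
    have := hB₁ x; rwa [eidx] at this
  have h3 : sY m₁ (φ x) ^ k₂ ≤ (C₁ * sX (((n : ℤ) + r).toNat) x ^ k₁) ^ k₂ :=
    pow_le_pow_left₀ (hYnonneg _ _) h2 k₂
  calc sZ n ((ψ ∘ φ) x) ≤ C₂ * sY m₁ (φ x) ^ k₂ := h1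
    _ ≤ C₂ * (C₁ * sX (((n : ℤ) + r).toNat) x ^ k₁) ^ k₂ := by
        exact mul_le_mul_of_nonneg_left h3 hC₂.le
    _ = C₂ * C₁ ^ k₂ * sX (((n : ℤ) + r).toNat) x ^ (k₁ * k₂) := by
        rw [mul_pow, ← pow_mul]; ring
end

section
/- (Abstract Hilbert-space version of the composition estimate for pseudodifferential action.) Let Δ ≥ 0 be self-adjoint on a Hilbert space H and P = P₀ (1+Δ)^{m/2} where P₀ is bounded, and suppose for each half-integer k there is a bounded operator T_k with [P₀, (1+Δ)^k] = (1+Δ)^{k-1/2} T_k. Then for Hilbert–Schmidt operators T, ‖(1+Δ)^{p/2} T P (1+Δ)^{q/2}‖_{HS} ≤ ‖P₀‖·‖(1+Δ)^{p/2} T (1+Δ)^{(q+m)/2}‖_{HS} + ‖T_{(q+m)/2}‖·‖(1+Δ)^{p/2} T (1+Δ)^{(q+m-1)/2}‖_{HS}. -/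
/-- abstract Hilbert-space version of the composition estimate
for the right action of a pseudodifferential operator.  `V` is the space of
smooth vectors, `G j` stands for `(1+Δ)^{j/2}`, `hs` for the Hilbert–Schmidt
norm and `opN` for the operator norm, with the standard ideal inequalities.
If `P = P₀ ∘ G (2·(m/2)) = P₀ ∘ Gᵐ` (written `P = P₀.comp (G m)`, i.e.
`P = P₀ (1+Δ)^{m/2}`) and for each half-integer `k` (encoded by `j = 2k ∈ ℤ`)
there is `T j` with `[P₀, (1+Δ)^{j/2}] = (1+Δ)^{(j-1)/2} T j`, then
`hs (G p ∘ T ∘ P ∘ G q) ≤ opN P₀ * hs (G p ∘ T ∘ G (q+m))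
  + opN (Tc (q+m)) * hs (G p ∘ T ∘ G (q+m-1))`. -/
theorem HS_composition_estimate
    {V : Type*} [AddCommGroup V] [Module ℝ V]
    (G : ℤ → (V →ₗ[ℝ] V))
    (hGgrp : ∀ i j : ℤ, (G i).comp (G j) = G (i + j))
    (hG0 : G 0 = LinearMap.id)
    (hs opN : (V →ₗ[ℝ] V) → ℝ)
    (hs_nonneg : ∀ S, 0 ≤ hs S) (opN_nonneg : ∀ S, 0 ≤ opN S)
    (hs_sub : ∀ S S' : V →ₗ[ℝ] V, hs (S + S') ≤ hs S + hs S')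
    (hs_mul_right : ∀ S S' : V →ₗ[ℝ] V, hs (S.comp S') ≤ hs S * opN S')
    (P₀ : V →ₗ[ℝ] V) (m : ℤ)
    (Tc : ℤ → (V →ₗ[ℝ] V))
    (hcomm : ∀ j : ℤ, P₀.comp (G j) - (G j).comp P₀ = (G (j - 1)).comp (Tc j))
    (T : V →ₗ[ℝ] V) (p q : ℤ) :
    hs ((G p).comp (T.comp ((P₀.comp (G m)).comp (G q)))) ≤
      opN P₀ * hs ((G p).comp (T.comp (G (q + m)))) +
      opN (Tc (q + m)) * hs ((G p).comp (T.comp (G (q + m - 1)))) := by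
  have h1 : (P₀.comp (G m)).comp (G q) = P₀.comp (G (q + m)) := by
    rw [LinearMap.comp_assoc, hGgrp, add_comm]
  have h2 : P₀.comp (G (q + m)) =
      (G (q + m)).comp P₀ + (G (q + m - 1)).comp (Tc (q + m)) := by
    have := hcomm (q + m)
    rw [sub_eq_iff_eq_add] at this
    rw [this, add_comm]
  have h3 : (G p).comp (T.comp ((P₀.comp (G m)).comp (G q))) =
      ((G p).comp (T.comp (G (q + m)))).comp P₀ +
      ((G p).comp (T.comp (G (q + m - 1)))).comp (Tc (q + m)) := by
    rw [h1, h2]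
    ext v
    simp [LinearMap.comp_apply, map_add]
  rw [h3]
  calc hs _ ≤ hs (((G p).comp (T.comp (G (q + m)))).comp P₀) +
      hs (((G p).comp (T.comp (G (q + m - 1)))).comp (Tc (q + m))) := hs_sub _ _
    _ ≤ hs ((G p).comp (T.comp (G (q + m)))) * opN P₀ +
        hs ((G p).comp (T.comp (G (q + m - 1)))) * opN (Tc (q + m)) :=
      add_le_add (hs_mul_right _ _) (hs_mul_right _ _)
    _ = _ := by ring
end

section
/- Converse direction of the characterization of regular distributions: if Δ ≥ 0 is self-adjoint with orthonormal eigenbasis (φ_n), eigenvalues λ_n ↗ ∞ growing at least polynomially, and u = ∑ a_n φ_n ∈ H with (a_n) not rapidly decreasing, then the map Θ_u : T ↦ Tu fails to be regular: there exists r ∈ ℤ such that for every b ∈ ℕ there is n ≥ b+|r| for which no constant C satisfies ‖Θ_u(T)‖_n ≤ C‖T‖_{n+r} for all finite-rank diagonal T = ∑ k_n φ_n⊗φ_n. -/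
open Filter

/-- A real sequence is rapidly decreasing if `n^m * k n → 0` for every `m`. -/
def RapidlyDecreasing (k : ℕ → ℝ) : Prop :=
  ∀ m : ℕ, Tendsto (fun n : ℕ => (n : ℝ) ^ m * k n) atTop (nhds 0)

/-- The index set `{(p,q) : p + q ≤ n, p ≥ -n, q ≥ -n}` of the grading of
smoothing operators. -/
noncomputable def smIdx (n : ℕ) : Finset (ℤ × ℤ) :=
  ((Finset.Icc (-(n : ℤ)) (2 * n)) ×ˢ (Finset.Icc (-(n : ℤ)) (2 * n))).filter
    (fun pq => pq.1 + pq.2 ≤ (n : ℤ))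

/-- For a finite-rank diagonal operator `T = ∑ k_n φ_n ⊗ φ_n`, the `n`-th
Sobolev norm of `Θ_u(T) = T u` (`u = ∑ a_n φ_n`):
`‖(1+Δ)^{n/2} T u‖ = (∑ |a_i k_i|² (1+λ_i)^n)^{1/2}`. -/
noncomputable def thetaNorm (a lam : ℕ → ℝ) (k : ℕ → ℝ) (n : ℕ) : ℝ :=
  Real.sqrt (∑' i, (a i * k i) ^ 2 * (1 + lam i) ^ (n : ℤ))

/-- The grading norm `‖T‖_m = ∑_{p+q≤m, p,q≥-m} ‖(1+Δ)^{p/2}T(1+Δ)^{q/2}‖_HS`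
of the diagonal operator `T = ∑ k_n φ_n ⊗ φ_n`, where
`‖(1+Δ)^{p/2}T(1+Δ)^{q/2}‖²_HS = ∑ |k_i|²(1+λ_i)^{p+q}`. -/
noncomputable def diagGradeNorm (lam : ℕ → ℝ) (k : ℕ → ℝ) (m : ℕ) : ℝ :=
  ∑ pq ∈ smIdx m, Real.sqrt (∑' i, (k i) ^ 2 * (1 + lam i) ^ (pq.1 + pq.2))

/-!
Test the assumed estimate on the rank-one diagonal operators `T = φ_m ⊗ φ_m`. With
`n = b + 2K` and `r = -2K`, it reads `|a_m| (1+λ_m)^{b/2+K} ≤ C · #(smIdx b) · (1+λ_m)^{b/2}`,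
so `|a_m| (1+λ_m)^K` is bounded. Polynomial growth `λ_m ≥ c m^{1/d}` with `K ≥ d (m₀+1)` turns
this into `|a_m| m^{m₀+1} = O(1)`, hence `m^{m₀} a_m → 0` for every `m₀`: `(a_m)` would be
rapidly decreasing.
-/

lemma thetaNorm_single (a lam : ℕ → ℝ) (m n : ℕ) :
    thetaNorm a lam (Pi.single m 1) n = |a m| * √((1 + lam m) ^ n) := by
  unfold thetaNorm
  rw [tsum_eq_single m fun i hi => by simp [hi], Real.sqrt_mul (sq_nonneg _)]
  simp [Real.sqrt_sq_eq_abs]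

lemma diagGradeNorm_single_le {lam : ℕ → ℝ} {m : ℕ} (hm : 0 ≤ lam m) (b : ℕ) :
    diagGradeNorm lam (Pi.single m 1) b ≤ (smIdx b).card * √((1 + lam m) ^ b) := by
  rw [← nsmul_eq_mul]
  refine Finset.sum_le_card_nsmul _ _ _ fun pq hpq => ?_
  rw [tsum_eq_single m fun i hi => by simp [hi]]
  simp only [Pi.single_eq_same, one_pow, one_mul]
  gcongr
  rw [← zpow_natCast]
  exact zpow_le_zpow_right₀ (by linarith) (Finset.mem_filter.mp hpq).2

lemma abs_mul_pow_le_of_thetaNorm_le {a lam : ℕ → ℝ} {b K : ℕ} {C : ℝ} (hC : 0 ≤ C)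
    (h : ∀ k : ℕ → ℝ, (Function.support k).Finite →
      thetaNorm a lam k (b + 2 * K) ≤ C * diagGradeNorm lam k b)
    {m : ℕ} (hm : 0 ≤ lam m) :
    |a m| * (1 + lam m) ^ K ≤ C * (smIdx b).card := by
  have hy : 0 < 1 + lam m := by linarith
  have hsplit : √((1 + lam m) ^ (b + 2 * K)) = (1 + lam m) ^ K * √((1 + lam m) ^ b) := by
    rw [pow_add, mul_comm, Real.sqrt_mul (by positivity), pow_mul', Real.sqrt_sq (by positivity)]
  have hδ := h (Pi.single m 1) ((Set.finite_singleton m).subset Pi.support_single_subset)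
  rw [thetaNorm_single, hsplit] at hδ
  have hb : 0 < √((1 + lam m) ^ b) := Real.sqrt_pos.mpr (by positivity)
  refine le_of_mul_le_mul_right ?_ hb
  calc |a m| * (1 + lam m) ^ K * √((1 + lam m) ^ b)
      ≤ C * diagGradeNorm lam (Pi.single m 1) b := by linarith
    _ ≤ C * ((smIdx b).card * √((1 + lam m) ^ b)) :=
      mul_le_mul_of_nonneg_left (diagGradeNorm_single_le hm b) hC
    _ = C * (smIdx b).card * √((1 + lam m) ^ b) := by ring

lemma mul_pow_le_pow_of_mul_rpow_le {c d x y : ℝ} {j K : ℕ} (hc : 0 ≤ c) (hd : 0 < d)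
    (hx : 1 ≤ x) (hK : d * j ≤ K) (hy : c * x ^ (1 / d) ≤ y) :
    c ^ K * x ^ j ≤ y ^ K := by
  have hxj : x ^ j ≤ (x ^ (1 / d)) ^ K := by
    rw [← Real.rpow_natCast, ← Real.rpow_natCast, ← Real.rpow_mul (by linarith)]
    refine Real.rpow_le_rpow_of_exponent_le hx ?_
    rw [one_div_mul_eq_div, le_div_iff₀ hd]
    linarith
  calc c ^ K * x ^ j ≤ c ^ K * (x ^ (1 / d)) ^ K := by gcongr
    _ = (c * x ^ (1 / d)) ^ K := (mul_pow _ _ _).symm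
    _ ≤ y ^ K := pow_le_pow_left₀ (by positivity) hy K

lemma tendsto_pow_mul_nhds_zero_of_abs_mul_pow_succ_le {f : ℕ → ℝ} {j : ℕ} {B : ℝ}
    (h : ∀ᶠ n in atTop, |f n| * (n : ℝ) ^ (j + 1) ≤ B) :
    Tendsto (fun n : ℕ => (n : ℝ) ^ j * f n) atTop (nhds 0) := by
  refine squeeze_zero_norm' ?_ (tendsto_const_div_atTop_nhds_zero_nat B)
  filter_upwards [h, eventually_gt_atTop 0] with n hn hpos
  have hn0 : (0 : ℝ) < n := Nat.cast_pos.mpr hpos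
  rw [Real.norm_eq_abs, abs_mul, abs_pow, Nat.abs_cast, le_div_iff₀ hn0]
  linarith [show (n : ℝ) ^ j * |f n| * n = |f n| * (n : ℝ) ^ (j + 1) by ring]

theorem theta_u_not_regular_of_not_rapidly_decreasing_general
    (a lam : ℕ → ℝ)
    (hnotrd : ¬ RapidlyDecreasing a)
    (hgrowth : ∃ (c d : ℝ), 0 < c ∧ 0 < d ∧ ∃ N : ℕ, ∀ n ≥ N,
      c * (n : ℝ) ^ ((1 : ℝ) / d) ≤ lam n) :
    ∃ r : ℤ, ∀ b : ℕ, ∃ n : ℕ, (b : ℤ) + |r| ≤ (n : ℤ) ∧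
      ¬ ∃ C : ℝ, 0 < C ∧ ∀ k : ℕ → ℝ, (Function.support k).Finite →
        thetaNorm a lam k n ≤ C * diagGradeNorm lam k ((n : ℤ) + r).toNat := by
  obtain ⟨m₀, hm₀⟩ := not_forall.mp hnotrd
  obtain ⟨c, d, hc, hd, N, hgr⟩ := hgrowth
  obtain ⟨K, hK⟩ : ∃ K : ℕ, d * (m₀ + 1) ≤ K := ⟨_, Nat.le_ceil _⟩
  refine ⟨-(2 * K), fun b => ⟨b + 2 * K, by simp [abs_of_nonneg], ?_⟩⟩
  rintro ⟨C, hC, hall⟩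
  have hidx : ((b + 2 * K : ℕ) + -(2 * K : ℤ)).toNat = b := by omega
  simp only [hidx] at hall
  refine hm₀ <| tendsto_pow_mul_nhds_zero_of_abs_mul_pow_succ_le
    (B := C * (smIdx b).card / c ^ K) ?_
  filter_upwards [eventually_ge_atTop (max N 1)] with m hm
  have hm1 : (1 : ℝ) ≤ m := by exact_mod_cast le_of_max_le_right hm
  have hlam : c * (m : ℝ) ^ (1 / d) ≤ lam m := hgr m (le_of_max_le_left hm)
  have hlam0 : 0 ≤ lam m := le_trans (by positivity) hlam
  have hpow : c ^ K * (m : ℝ) ^ (m₀ + 1) ≤ (1 + lam m) ^ K :=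
    mul_pow_le_pow_of_mul_rpow_le hc.le hd hm1 (by exact_mod_cast hK) (by linarith)
  rw [le_div_iff₀ (by positivity)]
  calc |a m| * (m : ℝ) ^ (m₀ + 1) * c ^ K = |a m| * (c ^ K * (m : ℝ) ^ (m₀ + 1)) := by ring
    _ ≤ |a m| * (1 + lam m) ^ K := by gcongr
    _ ≤ C * (smIdx b).card := abs_mul_pow_le_of_thetaNorm_le hC.le hall hlam0

/-- converse direction of the characterization of regular
distributions: if `Δ ≥ 0` has orthonormal eigenbasis `(φ_n)`, eigenvalues
`λ_n` nondecreasing, tending to `∞` with at least polynomial growth, and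
`u = ∑ a_n φ_n` with `(a_n) ∈ ℓ²` NOT rapidly decreasing, then `Θ_u : T ↦ Tu`
fails to be regular: there is `r ∈ ℤ` such that for every `b ∈ ℕ` there is
`n ≥ b + |r|` for which no constant `C > 0` satisfies
`‖Θ_u(T)‖_n ≤ C ‖T‖_{n+r}` for all finite-rank diagonal `T = ∑ k_n φ_n⊗φ_n`. -/
theorem theta_u_not_regular_of_not_rapidly_decreasing
    (a lam : ℕ → ℝ)
    (ha : Summable (fun n => (a n) ^ 2))
    (hnotrd : ¬ RapidlyDecreasing a)
    (hlam_mono : Monotone lam)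
    (hlam_nonneg : ∀ n, 0 ≤ lam n)
    (hlam_top : Tendsto lam atTop atTop)
    (hgrowth : ∃ (c d : ℝ), 0 < c ∧ 0 < d ∧ ∃ N : ℕ, ∀ n ≥ N,
      c * (n : ℝ) ^ ((1 : ℝ) / d) ≤ lam n) :
    ∃ r : ℤ, ∀ b : ℕ, ∃ n : ℕ, (b : ℤ) + |r| ≤ (n : ℤ) ∧
      ¬ ∃ C : ℝ, 0 < C ∧ ∀ k : ℕ → ℝ, (Function.support k).Finite →
        thetaNorm a lam k n ≤ C * diagGradeNorm lam k ((n : ℤ) + r).toNat :=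
  theta_u_not_regular_of_not_rapidly_decreasing_general a lam hnotrd hgrowth
end
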